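/- arXiv:1610.09544 — 5 statements merged into one kernel-verified Lean document; each statement's English description precedes it below -/
import Mathlib

section
/- Let L be a Lie algebra containing nonzero elements y, y₁, y₂, … with [y, yᵢ] = αᵢ yᵢ for scalars αᵢ ∈ ℂ. For any finite dimensional representation ρ of L on a vector space U, the set of distinct values αᵢ for which ρ(yᵢ) ≠ 0 has cardinality at most (dim U)² − dim U + 1. -/
/-!
If `[ρ y, ρ yᵢ] = αᵢ ρ yᵢ` with `ρ yᵢ ≠ 0`, then `ρ yᵢ` shifts the generalized eigenspace of
`ρ y` for `ν` into the one for `ν + αᵢ`, and is nonzero on one of them since they span `U`.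
So `αᵢ` is a difference of two eigenvalues of `ρ y`. There are at most `n = dim U`
eigenvalues, hence at most `n² − n` nonzero differences, plus the difference `0`.
-/

open Module End Set Pointwise

attribute [local instance 100] LieRing.ofAssociativeRing

theorem Finset.card_sub_self_le {G : Type*} [AddGroup G] [DecidableEq G] (s : Finset G) :
    (s - s).card ≤ s.card ^ 2 - s.card + 1 := by
  have hsub : s - s ⊆ insert 0 (s.offDiag.image fun p => p.1 - p.2) := by
    intro d hd
    obtain ⟨a, ha, b, hb, rfl⟩ := Finset.mem_sub.1 hd
    rcases eq_or_ne a b with rfl | hab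
    · simp
    · exact mem_insert_of_mem (mem_image.2 ⟨(a, b), mem_offDiag.2 ⟨ha, hb, hab⟩, rfl⟩)
  calc (s - s).card ≤ (insert 0 (s.offDiag.image fun p => p.1 - p.2)).card := card_le_card hsub
    _ ≤ (s.offDiag.image fun p => p.1 - p.2).card + 1 := card_insert_le _ _
    _ ≤ s.offDiag.card + 1 := Nat.add_le_add_right card_image_le 1
    _ = s.card ^ 2 - s.card + 1 := by rw [offDiag_card, sq]

theorem Set.ncard_sub_self_le {G : Type*} [AddGroup G] {s : Set G} (hs : s.Finite) :
    (s - s).ncard ≤ s.ncard ^ 2 - s.ncard + 1 := by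
  classical
  lift s to Finset G using hs
  rw [← Finset.coe_sub, ncard_coe_finset, ncard_coe_finset]
  exact s.card_sub_self_le

theorem Nat.monotone_sq_sub_self : Monotone fun n : ℕ => n ^ 2 - n := by
  intro m n hmn
  simp only [sq, ← Nat.mul_sub_one]
  exact Nat.mul_le_mul hmn (Nat.sub_le_sub_right hmn 1)

namespace Module.End

theorem mapsTo_maxGenEigenspace_of_lie_eq_smul {R M : Type*} [CommRing R] [AddCommGroup M]
    [Module R M] {f g : End R M} {μ : R} (h : ⁅f, g⁆ = μ • g) (ν : R) :
    MapsTo g (f.maxGenEigenspace ν) (f.maxGenEigenspace (ν + μ)) := by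
  have hsemi : SemiconjBy g (f - ν • 1) (f - (ν + μ) • 1) := by
    rw [Ring.lie_def, sub_eq_iff_eq_add] at h
    rw [SemiconjBy, mul_sub, sub_mul, mul_smul_comm, mul_one, smul_mul_assoc, one_mul, h, add_smul]
    abel
  intro x hx
  obtain ⟨k, hk⟩ := (mem_maxGenEigenspace f ν x).1 hx
  refine (mem_maxGenEigenspace f (ν + μ) (g x)).2 ⟨k, ?_⟩
  rw [← mul_apply, ← (hsemi.pow_right k).eq, mul_apply, hk, map_zero]

theorem hasEigenvalue_of_maxGenEigenspace_ne_bot {R M : Type*} [CommRing R] [AddCommGroup M]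
    [Module R M] {f : End R M} {μ : R} (h : f.maxGenEigenspace μ ≠ ⊥) : f.HasEigenvalue μ :=
  HasUnifEigenvalue.lt zero_lt_one h

variable {K V : Type*} [Field K] [AddCommGroup V] [Module K V] [FiniteDimensional K V]

theorem ncard_hasEigenvalue_le_finrank (f : End K V) :
    {μ | f.HasEigenvalue μ}.ncard ≤ finrank K V := by
  have : Fintype {μ // f.eigenspace μ ≠ ⊥} := f.finite_hasEigenvalue.fintype
  rw [← Nat.card_coe_set_eq]
  exact (Nat.card_eq_fintype_card (α := {μ // f.eigenspace μ ≠ ⊥})).trans_le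
    f.eigenspaces_iSupIndep.subtype_ne_bot_le_finrank

theorem mem_sub_of_lie_eq_smul [IsAlgClosed K] {f g : End K V} {μ : K} (h : ⁅f, g⁆ = μ • g)
    (hg : g ≠ 0) : μ ∈ {a | f.HasEigenvalue a} - {a | f.HasEigenvalue a} := by
  obtain ⟨ν, x, hx, hgx⟩ : ∃ ν, ∃ x ∈ f.maxGenEigenspace ν, g x ≠ 0 := by
    by_contra! hker
    refine hg (LinearMap.ker_eq_top.1 (top_le_iff.1 ?_))
    rw [← f.iSup_maxGenEigenspace_eq_top]
    exact iSup_le fun ν x hx => hker ν x hx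
  have hx0 : x ≠ 0 := by rintro rfl; exact hgx (map_zero g)
  refine ⟨ν + μ, hasEigenvalue_of_maxGenEigenspace_ne_bot ?_,
    ν, hasEigenvalue_of_maxGenEigenspace_ne_bot ?_, add_sub_cancel_left ν μ⟩
  · exact (Submodule.ne_bot_iff _).2 ⟨g x, mapsTo_maxGenEigenspace_of_lie_eq_smul h ν hx, hgx⟩
  · exact (Submodule.ne_bot_iff _).2 ⟨x, hx, hx0⟩

end Module.End

theorem stmt1_general {L : Type*} [LieRing L] [LieAlgebra ℂ L]
    {U : Type*} [AddCommGroup U] [Module ℂ U] [FiniteDimensional ℂ U]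
    (ρ : L →ₗ⁅ℂ⁆ Module.End ℂ U)
    (y : L) (ys : ℕ → L) (α : ℕ → ℂ)
    (hbr : ∀ i, ⁅y, ys i⁆ = α i • ys i) :
    {a : ℂ | ∃ i, α i = a ∧ ρ (ys i) ≠ 0}.ncard
      ≤ (Module.finrank ℂ U) ^ 2 - Module.finrank ℂ U + 1 := by
  set E := {μ | (ρ y).HasEigenvalue μ}
  have hE : E.Finite := (ρ y).finite_hasEigenvalue
  have hsub : {a : ℂ | ∃ i, α i = a ∧ ρ (ys i) ≠ 0} ⊆ E - E := by
    rintro _ ⟨i, rfl, hi⟩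
    refine mem_sub_of_lie_eq_smul ?_ hi
    rw [← ρ.map_lie, hbr, map_smul]
  calc {a : ℂ | ∃ i, α i = a ∧ ρ (ys i) ≠ 0}.ncard ≤ (E - E).ncard :=
        ncard_le_ncard hsub (hE.sub hE)
    _ ≤ E.ncard ^ 2 - E.ncard + 1 := ncard_sub_self_le hE
    _ ≤ finrank ℂ U ^ 2 - finrank ℂ U + 1 :=
        Nat.add_le_add_right (Nat.monotone_sq_sub_self (ncard_hasEigenvalue_le_finrank _)) 1

/-- If a Lie algebra `L` contains nonzero elements `y, y₁, y₂, …` with `[y, yᵢ] = αᵢ yᵢ`,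
then in any finite dimensional representation `(U, ρ)` of `L`, the number of distinct values
`αᵢ` for which `ρ(yᵢ) ≠ 0` is at most `(dim U)² − dim U + 1`. -/
theorem stmt1 {L : Type*} [LieRing L] [LieAlgebra ℂ L]
    {U : Type*} [AddCommGroup U] [Module ℂ U] [FiniteDimensional ℂ U]
    (ρ : L →ₗ⁅ℂ⁆ Module.End ℂ U)
    (y : L) (ys : ℕ → L) (α : ℕ → ℂ)
    (hy : y ≠ 0) (hys : ∀ i, ys i ≠ 0)
    (hbr : ∀ i, ⁅y, ys i⁆ = α i • ys i) :
    {a : ℂ | ∃ i, α i = a ∧ ρ (ys i) ≠ 0}.ncard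
      ≤ (Module.finrank ℂ U) ^ 2 - Module.finrank ℂ U + 1 :=
  stmt1_general ρ y ys α hbr
end

section
/- Suppose J = A_N ⊗ V where V is a vector space, and for each r ∈ ℤ^N operators H(r) ∈ End(V) are defined with h(r)(t^s ⊗ v) = Σ_{i=1}^m (r_{m+i} s_i − r_i s_{m+i}) t^{r+s} ⊗ v + t^{r+s} ⊗ H(r)v defining an action of the Hamiltonian algebra H_N. Then the operators satisfy [H(r), H(s)] = Σ_{i=1}^m (r_i s_{m+i} − r_{m+i} s_i)(H(r) + H(s) − H(r+s)) for all r, s ∈ ℤ^N. -/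
open Sum

/-!
Evaluate the bracket relation `⁅h(r), h(s)⁆ = c(r,s) h(r+s)` on `t⁰ ⊗ v`. Since `c(u,0) = 0`,
`h(u)(t⁰ ⊗ v) = t^u ⊗ H(u)v`; applying the action formula once more and using the antisymmetry
of `c`, both sides become `t^{r+s} ⊗ (⋯)`, and injectivity of `v ↦ t^{r+s} ⊗ v` identifies the
`V`-components.
-/

section ShiftAction

variable {K A V J : Type*} [CommRing K] [AddCommMonoid A]
  [AddCommGroup V] [Module K V] [AddCommGroup J] [Module K J]

theorem lie_eq_smul_of_shift_action (c : A → A → K) (hc_anti : ∀ r s, c s r = -c r s)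
    (hc_zero : ∀ r, c r 0 = 0) (ι : A → V →ₗ[K] J) (hι : ∀ s, Function.Injective (ι s))
    (hop : A → Module.End K J) (H : A → Module.End K V)
    (hact : ∀ r s v, hop r (ι s v) = c r s • ι (r + s) v + ι (r + s) (H r v))
    (r s : A) (hbr : ⁅hop r, hop s⁆ = c r s • hop (r + s)) :
    ⁅H r, H s⁆ = c s r • (H r + H s - H (r + s)) := by
  have hop_zero : ∀ u v, hop u (ι 0 v) = ι u (H u v) := fun u v => by
    simpa [hc_zero] using hact u 0 v
  ext v
  apply hι (r + s)
  have key := LinearMap.congr_fun hbr (ι 0 v)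
  simp only [Ring.lie_def, LinearMap.sub_apply, Module.End.mul_apply, LinearMap.smul_apply,
    hop_zero] at key
  rw [hact r s, hact s r, add_comm s r, hc_anti r s] at key
  simp only [Ring.lie_def, LinearMap.sub_apply, Module.End.mul_apply, LinearMap.smul_apply,
    LinearMap.add_apply, map_sub, map_add, map_smul, hc_anti r s]
  linear_combination (norm := module) key

end ShiftAction

-- `inl i` and `inr i` index the coordinates `i` and `m + i` of `ℤ^N`.
def hamiltonianForm {m : ℕ} (r s : Fin m ⊕ Fin m → ℤ) : ℤ :=
  ∑ i, (r (inr i) * s (inl i) - r (inl i) * s (inr i))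

theorem hamiltonianForm_comm {m : ℕ} (r s : Fin m ⊕ Fin m → ℤ) :
    hamiltonianForm s r = -hamiltonianForm r s := by
  simp only [hamiltonianForm, ← Finset.sum_neg_distrib]
  exact Finset.sum_congr rfl fun i _ => by ring

theorem hamiltonianForm_zero_right {m : ℕ} (r : Fin m ⊕ Fin m → ℤ) :
    hamiltonianForm r 0 = 0 := by
  simp [hamiltonianForm]

/-- Suppose `J = A_N ⊗ V` (with `ι s v` representing `t^s ⊗ v`, each `ι s` injective),
and `h(r)` acts on `J` by operators `hop r` satisfying the Hamiltonian algebra relations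
`[h(r), h(s)] = Σᵢ (r_{m+i}sᵢ − rᵢs_{m+i}) h(r+s)`, via
`h(r)(t^s ⊗ v) = Σᵢ (r_{m+i}sᵢ − rᵢs_{m+i}) t^{r+s} ⊗ v + t^{r+s} ⊗ H(r)v`.
Then `[H(r), H(s)] = Σᵢ (rᵢs_{m+i} − r_{m+i}sᵢ)(H(r) + H(s) − H(r+s))`.
Coordinates `1,…,m` are indexed by `inl i` and `m+1,…,2m` by `inr i`. -/
theorem stmt5 {m : ℕ} {V J : Type*}
    [AddCommGroup V] [Module ℂ V] [AddCommGroup J] [Module ℂ J]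
    (ι : (Fin m ⊕ Fin m → ℤ) → V →ₗ[ℂ] J)
    (hι : ∀ s, Function.Injective (ι s))
    (hop : (Fin m ⊕ Fin m → ℤ) → Module.End ℂ J)
    (H : (Fin m ⊕ Fin m → ℤ) → Module.End ℂ V)
    (hbr : ∀ r s : Fin m ⊕ Fin m → ℤ,
      ⁅hop r, hop s⁆ = ∑ i : Fin m,
        ((r (inr i) * s (inl i) - r (inl i) * s (inr i) : ℤ) : ℂ) • hop (r + s))
    (hact : ∀ (r s : Fin m ⊕ Fin m → ℤ) (v : V),
      hop r (ι s v) =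
        (∑ i : Fin m, ((r (inr i) * s (inl i) - r (inl i) * s (inr i) : ℤ) : ℂ)) • ι (r + s) v
          + ι (r + s) (H r v)) :
    ∀ r s : Fin m ⊕ Fin m → ℤ,
      ⁅H r, H s⁆ = ∑ i : Fin m,
        ((r (inl i) * s (inr i) - r (inr i) * s (inl i) : ℤ) : ℂ) • (H r + H s - H (r + s)) := by
  intro r s
  have hcoeff : ∀ r s : Fin m ⊕ Fin m → ℤ,
      ∑ i : Fin m, ((r (inr i) * s (inl i) - r (inl i) * s (inr i) : ℤ) : ℂ)
        = (hamiltonianForm r s : ℂ) := by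
    intro r s
    simp [hamiltonianForm]
  have hcoeff' : ∑ i : Fin m, ((r (inl i) * s (inr i) - r (inr i) * s (inl i) : ℤ) : ℂ)
      = (hamiltonianForm s r : ℂ) := by
    rw [← hcoeff]
    exact Finset.sum_congr rfl fun i _ => by push_cast; ring
  rw [← Finset.sum_smul, hcoeff']
  refine lie_eq_smul_of_shift_action (fun r s => (hamiltonianForm r s : ℂ))
    (fun r s => by simp [hamiltonianForm_comm r s]) (fun r => by simp [hamiltonianForm_zero_right])
    ι hι hop H (fun r s v => ?_) r s ?_
  · rw [hact, hcoeff]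
  · rw [hbr, ← Finset.sum_smul, hcoeff]
end

section
/- In the 𝔰𝔭_N-module L_n (n ≥ 1) via the adjoint action of L₀, the element X(n e₁) = −x₁ⁿ ∂/∂x_{m+1} is, up to scalar, the unique weight vector annihilated by all raising operators x_i ∂/∂x_{m+i}, x_i ∂/∂x_j − x_{m+j} ∂/∂x_{m+i} and x_i ∂/∂x_{m+j} + x_j ∂/∂x_{m+i} for i < j (i.e., the unique highest weight vector). -/
open Sum MvPolynomial

/-- The algebra `ℂ[x₁,…,x_N]`, `N = 2m`, with coordinates `1,…,m` indexed by `inl i`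
and `m+1,…,2m` indexed by `inr i`. -/
abbrev PolyA (m : ℕ) := MvPolynomial (Fin m ⊕ Fin m) ℂ

/-- The monomial `x^a`. -/
noncomputable def xpow {m : ℕ} (a : Fin m ⊕ Fin m →₀ ℕ) : PolyA m := monomial a 1

/-- `X(r) = Σ_{i=1}^m (r_{m+i} x^{r−e_{m+i}} ∂/∂xᵢ − rᵢ x^{r−eᵢ} ∂/∂x_{m+i})`. -/
noncomputable def XH {m : ℕ} (r : Fin m ⊕ Fin m →₀ ℕ) : Derivation ℂ (PolyA m) (PolyA m) :=
  ∑ i : Fin m,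
    ((r (inr i) : ℂ) • (xpow (r - Finsupp.single (inr i) 1) • pderiv (inl i))
      - (r (inl i) : ℂ) • (xpow (r - Finsupp.single (inl i) 1) • pderiv (inr i)))

/-- The derivation `x_a ∂/∂x_b`. -/
noncomputable def xd {m : ℕ} (a b : Fin m ⊕ Fin m) : Derivation ℂ (PolyA m) (PolyA m) :=
  (X a : PolyA m) • pderiv b

/-- `L_n = span{X(r) : |r| = n+2}`. -/
noncomputable def Lcomp (m : ℕ) (n : ℕ) : Submodule ℂ (Derivation ℂ (PolyA m) (PolyA m)) :=
  Submodule.span ℂ {d | ∃ r : Fin m ⊕ Fin m →₀ ℕ, (∑ j, r j) = n + 2 ∧ d = XH r}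

/-- `u` is annihilated by the adjoint action of all raising operators
`x_i ∂/∂x_{m+i}`, `x_i ∂/∂x_j − x_{m+j} ∂/∂x_{m+i}` and `x_i ∂/∂x_{m+j} + x_j ∂/∂x_{m+i}`
(`i < j`) of `𝔰𝔭_N ≅ L₀`. -/
def RaisingAnn {m : ℕ} (u : Derivation ℂ (PolyA m) (PolyA m)) : Prop :=
  (∀ i : Fin m, ⁅xd (inl i) (inr i), u⁆ = 0) ∧
  (∀ i j : Fin m, i < j →
    ⁅xd (inl i) (inl j) - xd (inr j) (inr i), u⁆ = 0 ∧
    ⁅xd (inl i) (inr j) + xd (inl j) (inr i), u⁆ = 0)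


/-!
`H ↦ hamiltonian H` (the Hamiltonian vector field of `H` for `Σ dxᵢ ∧ dx_{m+i}`) is a Lie algebra
map from the Poisson algebra of polynomials, `X(r)` is the Hamiltonian field of `x^r`, and each
raising operator of `𝔰𝔭_N` is the Hamiltonian field of a quadratic polynomial. Hence bracketing
with a raising operator `D` sends `hamiltonian H` to `hamiltonian (D H)`, and since only constants
have vanishing Hamiltonian field, `hamiltonian H` is annihilated by all raising operators exactly
when `∂H/∂x_c = 0` for every coordinate `c ≠ x₁`. A homogeneous `H` of degree `n + 2` with this
property is a multiple of `x₁^{n+2}`.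
-/

namespace MvPolynomial

section Pderiv

variable {σ R : Type*} [CommRing R]

theorem pderiv_pderiv_comm (i j : σ) (p : MvPolynomial σ R) :
    pderiv i (pderiv j p) = pderiv j (pderiv i p) := by
  have h : ⁅pderiv (R := R) i, pderiv (R := R) j⁆ = 0 := by
    classical
    refine derivation_ext fun k => ?_
    simp only [Derivation.commutator_apply, pderiv_X, Pi.single_apply]
    split_ifs <;> simp
  simpa [Derivation.commutator_apply, sub_eq_zero] using DFunLike.congr_fun h p

variable [IsDomain R] [CharZero R]

theorem coeff_eq_zero_of_pderiv_eq_zero {p : MvPolynomial σ R} {b : σ} (h : pderiv b p = 0)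
    {a : σ →₀ ℕ} (hab : a b ≠ 0) : coeff a p = 0 := by
  have hle : Finsupp.single b 1 ≤ a := Finsupp.single_le_iff.mpr (Nat.one_le_iff_ne_zero.mpr hab)
  have := coeff_pderiv (i := b) p (a - Finsupp.single b 1)
  rw [h, coeff_zero, tsub_add_cancel_of_le hle, eq_comm] at this
  exact (mul_eq_zero.mp this).resolve_right (Nat.cast_add_one_ne_zero _)

theorem eq_C_of_forall_pderiv_eq_zero {p : MvPolynomial σ R} (h : ∀ b, pderiv b p = 0) :
    p = C (coeff 0 p) := by
  classical
  ext a
  rw [coeff_C]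
  split_ifs with ha
  · rw [ha]
  · obtain ⟨b, hb⟩ := Finsupp.ne_iff.mp (Ne.symm ha)
    exact coeff_eq_zero_of_pderiv_eq_zero (h b) hb

theorem IsHomogeneous.eq_monomial_of_pderiv_eq_zero {p : MvPolynomial σ R} {d : ℕ}
    (hp : p.IsHomogeneous d) {b : σ} (h : ∀ c ≠ b, pderiv c p = 0) :
    p = monomial (Finsupp.single b d) (coeff (Finsupp.single b d) p) := by
  classical
  ext a
  rw [coeff_monomial]
  split_ifs with ha
  · rw [ha]
  · by_contra hpa
    have hdeg : a.degree = d := by rw [Finsupp.degree_eq_weight_one]; exact hp hpa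
    have hsupp : ∀ c ≠ b, a c = 0 := fun c hc =>
      by_contra fun hac => hpa (coeff_eq_zero_of_pderiv_eq_zero (h c hc) hac)
    have ha_single : a = Finsupp.single b (a b) := by
      ext c
      by_cases hc : c = b
      · simp [hc]
      · simp [hsupp c hc, Ne.symm hc]
    rw [ha_single, Finsupp.degree_single] at hdeg
    exact ha (hdeg ▸ ha_single.symm)

end Pderiv

section Hamiltonian

variable {ι R : Type*} [Fintype ι] [CommRing R]

local notation "Der" => Derivation R (MvPolynomial (ι ⊕ ι) R) (MvPolynomial (ι ⊕ ι) R)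

noncomputable def hamiltonian : MvPolynomial (ι ⊕ ι) R →ₗ[R] Der :=
  ∑ i, ((pderiv (inr i)).toLinearMap.smulRight (pderiv (inl i))
    - (pderiv (inl i)).toLinearMap.smulRight (pderiv (inr i)))

theorem hamiltonian_eq_sum (H : MvPolynomial (ι ⊕ ι) R) :
    hamiltonian H =
      ∑ i, (pderiv (inr i) H • pderiv (inl i) - pderiv (inl i) H • pderiv (inr i) : Der) := by
  simp [hamiltonian]

theorem hamiltonian_apply (H p : MvPolynomial (ι ⊕ ι) R) :
    hamiltonian H p =
      ∑ i, (pderiv (inr i) H * pderiv (inl i) p - pderiv (inl i) H * pderiv (inr i) p) := by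
  rw [hamiltonian_eq_sum, ← Derivation.coeFnAddMonoidHom_apply, map_sum, Finset.sum_apply]
  simp

theorem hamiltonian_apply_X_inl (H : MvPolynomial (ι ⊕ ι) R) (k : ι) :
    hamiltonian H (X (inl k)) = pderiv (inr k) H := by
  classical
  simp [hamiltonian_apply, pderiv_X, Pi.single_apply]

theorem hamiltonian_apply_X_inr (H : MvPolynomial (ι ⊕ ι) R) (k : ι) :
    hamiltonian H (X (inr k)) = -pderiv (inl k) H := by
  classical
  simp [hamiltonian_apply, pderiv_X, Pi.single_apply]

theorem hamiltonian_apply_swap (G H : MvPolynomial (ι ⊕ ι) R) :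
    hamiltonian G H = -hamiltonian H G := by
  simp only [hamiltonian_apply, ← Finset.sum_neg_distrib]
  exact Finset.sum_congr rfl fun i _ => by ring

theorem pderiv_hamiltonian_apply (c : ι ⊕ ι) (G H : MvPolynomial (ι ⊕ ι) R) :
    pderiv c (hamiltonian G H) = hamiltonian (pderiv c G) H + hamiltonian G (pderiv c H) := by
  simp only [hamiltonian_apply, map_sum, map_sub, Derivation.leibniz, smul_eq_mul,
    ← Finset.sum_add_distrib]
  refine Finset.sum_congr rfl fun i _ => ?_
  rw [pderiv_pderiv_comm c (inl i) H, pderiv_pderiv_comm c (inr i) H,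
    pderiv_pderiv_comm c (inl i) G, pderiv_pderiv_comm c (inr i) G]
  ring

theorem lie_hamiltonian (G H : MvPolynomial (ι ⊕ ι) R) :
    ⁅hamiltonian G, hamiltonian H⁆ = hamiltonian (hamiltonian G H) := by
  refine derivation_ext fun c => ?_
  rcases c with k | k
  all_goals
    simp only [Derivation.commutator_apply, hamiltonian_apply_X_inl, hamiltonian_apply_X_inr,
      pderiv_hamiltonian_apply, map_neg]
    rw [hamiltonian_apply_swap H]
    ring

theorem lie_hamiltonian_of_eq {D : Der} {G : MvPolynomial (ι ⊕ ι) R} (hD : D = hamiltonian G)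
    (H : MvPolynomial (ι ⊕ ι) R) : ⁅D, hamiltonian H⁆ = hamiltonian (D H) := by
  rw [hD, lie_hamiltonian]

theorem pderiv_eq_zero_of_hamiltonian_eq_zero {H : MvPolynomial (ι ⊕ ι) R}
    (h : hamiltonian H = 0) (c : ι ⊕ ι) : pderiv c H = 0 := by
  rcases c with k | k
  · simpa [h] using (hamiltonian_apply_X_inr H k).symm
  · simpa [h] using (hamiltonian_apply_X_inl H k).symm

variable [IsDomain R] [CharZero R]

theorem eq_zero_of_hamiltonian_eq_zero {H : MvPolynomial (ι ⊕ ι) R} (h0 : coeff 0 H = 0)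
    (h : hamiltonian H = 0) : H = 0 := by
  rw [eq_C_of_forall_pderiv_eq_zero (pderiv_eq_zero_of_hamiltonian_eq_zero h), h0, C_0]

theorem eq_zero_of_hamiltonian_X_mul_eq_zero {a : ι ⊕ ι} {p : MvPolynomial (ι ⊕ ι) R}
    (h : hamiltonian (X a * p) = 0) : p = 0 := by
  have h0 : coeff 0 (X a * p) = 0 := by rw [← constantCoeff_eq]; simp
  exact (mul_eq_zero.mp (eq_zero_of_hamiltonian_eq_zero h0 h)).resolve_left (X_ne_zero a)

end Hamiltonian

end MvPolynomial

section RaisingOperators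

variable {m : ℕ}

theorem XH_eq_hamiltonian (r : Fin m ⊕ Fin m →₀ ℕ) : XH r = hamiltonian (monomial r 1) := by
  rw [XH, hamiltonian_eq_sum]
  refine Finset.sum_congr rfl fun i _ => ?_
  simp only [pderiv_monomial, xpow, ← smul_assoc, smul_monomial, one_mul, smul_eq_mul, mul_one]

theorem xd_apply (a b : Fin m ⊕ Fin m) (p : PolyA m) : xd a b p = X a * pderiv b p := rfl

theorem xd_inl_inr_self_eq_hamiltonian (i : Fin m) :
    xd (inl i) (inr i) = hamiltonian ((-2⁻¹ : ℂ) • X (inl i) ^ 2) := by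
  classical
  refine derivation_ext fun c => ?_
  rcases c with k | k
  · simp [xd_apply, hamiltonian_apply_X_inl, pderiv_X]
  · rcases eq_or_ne i k with rfl | hik
    · simp [xd_apply, hamiltonian_apply_X_inr]
      rw [two_mul]
      module
    · simp [xd_apply, hamiltonian_apply_X_inr, hik, hik.symm]

theorem xd_sub_xd_eq_hamiltonian (i j : Fin m) :
    xd (inl i) (inl j) - xd (inr j) (inr i) = hamiltonian (X (inl i) * X (inr j)) := by
  classical
  refine derivation_ext fun c => ?_
  rcases c with k | k <;>
    simp [xd_apply, hamiltonian_apply_X_inl, hamiltonian_apply_X_inr, pderiv_X, Pi.single_apply]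
  all_goals split_ifs <;> subst_vars <;> simp_all

theorem xd_add_xd_eq_hamiltonian (i j : Fin m) :
    xd (inl i) (inr j) + xd (inl j) (inr i) = hamiltonian (-(X (inl i) * X (inl j))) := by
  classical
  refine derivation_ext fun c => ?_
  rcases c with k | k <;>
    simp [xd_apply, hamiltonian_apply_X_inl, hamiltonian_apply_X_inr, pderiv_X, Pi.single_apply]
  all_goals split_ifs <;> subst_vars <;> simp_all

theorem raisingAnn_hamiltonian_iff (hm : 0 < m) (H : PolyA m) :
    RaisingAnn (hamiltonian H) ↔ ∀ c ≠ inl ⟨0, hm⟩, pderiv c H = 0 := by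
  have hE (i : Fin m) : ⁅xd (inl i) (inr i), hamiltonian H⁆ =
      hamiltonian (X (inl i) * pderiv (inr i) H) :=
    lie_hamiltonian_of_eq (xd_inl_inr_self_eq_hamiltonian i) H
  have hA (i j : Fin m) : ⁅xd (inl i) (inl j) - xd (inr j) (inr i), hamiltonian H⁆ =
      hamiltonian (X (inl i) * pderiv (inl j) H - X (inr j) * pderiv (inr i) H) :=
    lie_hamiltonian_of_eq (xd_sub_xd_eq_hamiltonian i j) H
  have hB (i j : Fin m) : ⁅xd (inl i) (inr j) + xd (inl j) (inr i), hamiltonian H⁆ =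
      hamiltonian (X (inl i) * pderiv (inr j) H + X (inl j) * pderiv (inr i) H) :=
    lie_hamiltonian_of_eq (xd_add_xd_eq_hamiltonian i j) H
  constructor
  · rintro ⟨hann_E, hann_AB⟩
    have hinr (i : Fin m) : pderiv (inr i) H = 0 :=
      eq_zero_of_hamiltonian_X_mul_eq_zero (hE i ▸ hann_E i)
    rintro (j | i) hc
    · have hj : ⟨0, hm⟩ < j :=
        Fin.lt_def.mpr (Nat.pos_of_ne_zero fun h => hc (congrArg inl (Fin.ext h)))
      have hann_A := (hann_AB _ _ hj).1
      rw [hA, hinr, mul_zero, sub_zero] at hann_A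
      exact eq_zero_of_hamiltonian_X_mul_eq_zero hann_A
    · exact hinr i
  · intro h
    have hinr (i : Fin m) : pderiv (inr i) H = 0 := h _ inr_ne_inl
    refine ⟨fun i => by rw [hE, hinr, mul_zero, map_zero], fun i j hij => ⟨?_, ?_⟩⟩
    · have hj : pderiv (inl j) H = 0 := h _ (by rintro ⟨⟩; exact Nat.not_lt_zero _ hij)
      rw [hA, hj, hinr, mul_zero, mul_zero, sub_zero, map_zero]
    · rw [hB, hinr, hinr, mul_zero, mul_zero, add_zero, map_zero]

theorem Lcomp_le_map_homogeneousSubmodule (n : ℕ) :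
    Lcomp m n ≤ (homogeneousSubmodule (Fin m ⊕ Fin m) ℂ (n + 2)).map hamiltonian := by
  refine Submodule.span_le.mpr ?_
  rintro _ ⟨r, hr, rfl⟩
  exact ⟨monomial r 1, isHomogeneous_monomial _ (by rw [Finsupp.degree_eq_sum, hr]),
    (XH_eq_hamiltonian r).symm⟩

end RaisingOperators

theorem stmt9_general {m : ℕ} (hm : 0 < m) (n : ℕ) :
    (XH (Finsupp.single (inl ⟨0, hm⟩) (n + 2)) ∈ Lcomp m n ∧
      RaisingAnn (XH (Finsupp.single (inl ⟨0, hm⟩) (n + 2))) ∧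
      XH (Finsupp.single (inl (⟨0, hm⟩ : Fin m)) (n + 2)) ≠ 0) ∧
    ∀ u ∈ Lcomp m n,
      (∃ μ : Fin m → ℂ, ∀ i : Fin m, ⁅xd (inl i) (inl i) - xd (inr i) (inr i), u⁆ = μ i • u) →
      RaisingAnn u →
      ∃ c : ℂ, u = c • XH (Finsupp.single (inl ⟨0, hm⟩) (n + 2)) := by
  set top : Fin m ⊕ Fin m →₀ ℕ := Finsupp.single (inl ⟨0, hm⟩) (n + 2)
  have hXH : XH top = hamiltonian (monomial top 1) := XH_eq_hamiltonian top
  have htop_deg : ∑ j, top j = n + 2 := by rw [← Finsupp.degree_eq_sum, Finsupp.degree_single]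
  refine ⟨⟨Submodule.subset_span ⟨top, htop_deg, rfl⟩, ?_, ?_⟩, ?_⟩
  · rw [hXH, raisingAnn_hamiltonian_iff hm]
    intro c hc
    simp [top, pderiv_monomial, Finsupp.single_eq_of_ne hc]
  · rw [hXH]
    intro h
    simpa [top] using eq_zero_of_hamiltonian_eq_zero (by simp [top]) h
  · rintro u hu - hann
    obtain ⟨H, hH, rfl⟩ := Lcomp_le_map_homogeneousSubmodule n hu
    rw [raisingAnn_hamiltonian_iff hm] at hann
    have hH_eq := ((mem_homogeneousSubmodule _ _).mp hH).eq_monomial_of_pderiv_eq_zero hann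
    refine ⟨coeff top H, ?_⟩
    rw [hXH, ← map_smul, smul_monomial, smul_eq_mul, mul_one, ← hH_eq]

/-- In the `𝔰𝔭_N`-module `L_n` (`n ≥ 1`) under the adjoint action of `L₀`, the element
`X((n+2)e₁) = −x₁^{n+2} ∂/∂x_{m+1}` is, up to scalar, the unique weight vector (for the Cartan
subalgebra spanned by the `x_i∂/∂x_i − x_{m+i}∂/∂x_{m+i}`) annihilated by all raising
operators, i.e. the unique highest weight vector of `L_n`. -/
theorem stmt9 {m : ℕ} (hm : 0 < m) (n : ℕ) (hn : 1 ≤ n) :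
    (XH (Finsupp.single (inl ⟨0, hm⟩) (n + 2)) ∈ Lcomp m n ∧
      RaisingAnn (XH (Finsupp.single (inl ⟨0, hm⟩) (n + 2))) ∧
      XH (Finsupp.single (inl (⟨0, hm⟩ : Fin m)) (n + 2)) ≠ 0) ∧
    ∀ u ∈ Lcomp m n,
      (∃ μ : Fin m → ℂ, ∀ i : Fin m, ⁅xd (inl i) (inl i) - xd (inr i) (inr i), u⁆ = μ i • u) →
      RaisingAnn u →
      ∃ c : ℂ, u = c • XH (Finsupp.single (inl ⟨0, hm⟩) (n + 2)) :=
  stmt9_general hm n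
end

section
/- Let V be a finite dimensional module over 𝔥_N⁺ = ⊕_{k≥0} L_k, the positive part of the polynomial Hamiltonian Lie algebra, N = 2m ≥ 2. Then there exists k₀ such that L_k acts trivially on V for all k ≥ k₀. -/
/-!
The element `H = X(eᵢ + e_{m+i})` acts diagonally on the monomials in one variable:
`⁅H, X(n eᵢ)⁆ = n X(n eᵢ)` and `⁅H, X(n e_{m+i})⁆ = -n X(n e_{m+i})`. In a finite dimensional
representation `ad (ρ H)` has only finitely many eigenvalues, so for every variable `d` some
`X(p e_d)` with `p ≥ 2` acts by zero. Bracketing `X(p e_d)` with a suitable `X(b)` gives a nonzero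
multiple of any `X(r)` with `r_d ≥ p - 1` and `|r| ≥ p`, so these act by zero too; finally, a
multi-index of large degree has some large coordinate.
-/

open Sum Finset

attribute [local instance 100] LieRing.ofAssociativeRing

theorem Module.End.exists_eq_zero_of_forall_apply_eq_smul {K M ι : Type*} [Field K]
    [AddCommGroup M] [Module K M] [FiniteDimensional K M] [Infinite ι] (f : Module.End K M)
    (c : ι → K) (hc : Function.Injective c) (v : ι → M) (hv : ∀ i, f (v i) = c i • v i) :
    ∃ i, v i = 0 := by
  by_contra! hne
  have hli : LinearIndependent K v :=
    f.eigenvectors_linearIndependent' c hc v fun i =>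
      ⟨Module.End.mem_eigenspace_iff.mpr (hv i), hne i⟩
  exact Infinite.not_finite hli.finite_of_isNoetherian

theorem LieHom.exists_map_eq_zero_of_lie_eq_zsmul {K g L ι : Type*} [Field K] [CharZero K]
    [LieRing g] [LieAlgebra K g] [LieRing L] [LieAlgebra K L] [FiniteDimensional K L]
    [Infinite ι] (ρ : g →ₗ⁅K⁆ L) (h : g) (v : ι → g) (c : ι → ℤ) (hc : Function.Injective c)
    (hv : ∀ i, ⁅h, v i⁆ = c i • v i) : ∃ i, ρ (v i) = 0 :=
  (LieAlgebra.ad K L (ρ h)).exists_eq_zero_of_forall_apply_eq_smul (fun i => (c i : K))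
    (Int.cast_injective.comp hc) (fun i => ρ (v i)) fun i => by
      rw [LieAlgebra.ad_apply, ← LieHom.map_lie, hv, map_zsmul, Int.cast_smul_eq_zsmul]

def HamiltonianBracket {m : ℕ} {g : Type*} [LieRing g] (X : (Fin m ⊕ Fin m → ℕ) → g) : Prop :=
  ∀ j k : Fin m ⊕ Fin m → ℕ, 1 < ∑ a, j a → 1 < ∑ a, k a →
    ⁅X j, X k⁆ = ∑ i : Fin m,
      (((j (inr i) * k (inl i) : ℕ) : ℤ) - ((j (inl i) * k (inr i) : ℕ) : ℤ)) •
        X (j + k - (Pi.single (inl i) 1 + Pi.single (inr i) 1))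

namespace HamiltonianBracket

variable {m : ℕ} {g : Type*} [LieRing g] {X : (Fin m ⊕ Fin m → ℕ) → g}

theorem lie_eq_of_supported (hX : HamiltonianBracket X) {j k : Fin m ⊕ Fin m → ℕ} (i : Fin m)
    (hsupp : ∀ l, l ≠ i → j (inl l) = 0 ∧ j (inr l) = 0)
    (hj : 1 < ∑ a, j a) (hk : 1 < ∑ a, k a) :
    ⁅X j, X k⁆ = (((j (inr i) * k (inl i) : ℕ) : ℤ) - ((j (inl i) * k (inr i) : ℕ) : ℤ)) •
      X (j + k - (Pi.single (inl i) 1 + Pi.single (inr i) 1)) := by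
  rw [hX j k hj hk, sum_eq_single i]
  · intro l _ hl
    simp [(hsupp l hl).1, (hsupp l hl).2]
  · simp

theorem lie_single_inl (hX : HamiltonianBracket X) (i : Fin m) {n : ℕ} (hn : 2 ≤ n) :
    ⁅X (Pi.single (inl i) 1 + Pi.single (inr i) 1), X (Pi.single (inl i) n)⁆ =
      (n : ℤ) • X (Pi.single (inl i) n) := by
  rw [hX.lie_eq_of_supported i (fun l hl => by simp [hl]) (by simp [sum_add_distrib])
    (by simp; omega), add_tsub_cancel_left]
  simp

theorem lie_single_inr (hX : HamiltonianBracket X) (i : Fin m) {n : ℕ} (hn : 2 ≤ n) :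
    ⁅X (Pi.single (inl i) 1 + Pi.single (inr i) 1), X (Pi.single (inr i) n)⁆ =
      -(n : ℤ) • X (Pi.single (inr i) n) := by
  rw [hX.lie_eq_of_supported i (fun l hl => by simp [hl]) (by simp [sum_add_distrib])
    (by simp; omega), add_tsub_cancel_left]
  simp

theorem exists_lie_single_eq_zsmul (hX : HamiltonianBracket X) {d : Fin m ⊕ Fin m} {q : ℕ}
    {r : Fin m ⊕ Fin m → ℕ} (hq : 2 ≤ q) (hrd : q ≤ r d + 1) (hr : q ≤ ∑ a, r a) :
    ∃ (b : Fin m ⊕ Fin m → ℕ) (c : ℤ), c ≠ 0 ∧ ⁅X (Pi.single d q), X b⁆ = c • X r := by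
  set b := r + Pi.single d.swap 1 - Pi.single d (q - 1) with hb
  have hb_add : b + Pi.single d (q - 1) = r + Pi.single d.swap 1 := by
    refine tsub_add_cancel_of_le fun a => ?_
    by_cases h : a = d
    · subst h
      simp only [Pi.add_apply, Pi.single_eq_same]
      omega
    · simp [Pi.single_eq_of_ne h]
  have hb_sum : 1 < ∑ a, b a := by
    have := congrArg (fun f => ∑ a, f a) hb_add
    simp only [Pi.add_apply, sum_add_distrib, sum_pi_single', mem_univ,
      if_true] at this
    omega
  have hq_sum : 1 < ∑ a, (Pi.single d q : Fin m ⊕ Fin m → ℕ) a := by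
    rw [sum_pi_single', if_pos (mem_univ d)]
    omega
  refine ⟨b, ?_⟩
  rcases d with i | i
  · have hidx : Pi.single (inl i) q + b - (Pi.single (inl i) 1 + Pi.single (inr i) 1) = r := by
      funext a
      simp only [hb, Pi.add_apply, Pi.sub_apply, Pi.single_apply, swap_inl]
      split_ifs <;> subst_vars <;> omega
    rw [hX.lie_eq_of_supported i (fun l hl => by simp [hl]) hq_sum hb_sum, hidx]
    refine ⟨_, ?_, rfl⟩
    simp [hb]
    exact ⟨by omega, by omega⟩
  · have hidx : Pi.single (inr i) q + b - (Pi.single (inl i) 1 + Pi.single (inr i) 1) = r := by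
      funext a
      simp only [hb, Pi.add_apply, Pi.sub_apply, Pi.single_apply, swap_inr]
      split_ifs <;> subst_vars <;> omega
    rw [hX.lie_eq_of_supported i (fun l hl => by simp [hl]) hq_sum hb_sum, hidx]
    refine ⟨_, ?_, rfl⟩
    simp [hb]
    exact ⟨by omega, by omega⟩

variable {K L : Type*} [Field K] [CharZero K] [LieAlgebra K g] [LieRing L] [LieAlgebra K L]

theorem exists_map_single_eq_zero [FiniteDimensional K L] (hX : HamiltonianBracket X)
    (ρ : g →ₗ⁅K⁆ L) (d : Fin m ⊕ Fin m) : ∃ p, 2 ≤ p ∧ ρ (X (Pi.single d p)) = 0 := by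
  rcases d with i | i
  · obtain ⟨n, hn⟩ := ρ.exists_map_eq_zero_of_lie_eq_zsmul _
      (fun n : ℕ => X (Pi.single (inl i) (n + 2))) (fun n => n + 2)
      (fun a b h => by simpa using h) fun n => hX.lie_single_inl i (by omega)
    exact ⟨n + 2, by omega, hn⟩
  · obtain ⟨n, hn⟩ := ρ.exists_map_eq_zero_of_lie_eq_zsmul _
      (fun n : ℕ => X (Pi.single (inr i) (n + 2))) (fun n => -(n + 2))
      (fun a b h => by simpa using h) fun n => hX.lie_single_inr i (by omega)
    exact ⟨n + 2, by omega, hn⟩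

theorem map_eq_zero_of_map_single_eq_zero (hX : HamiltonianBracket X) (ρ : g →ₗ⁅K⁆ L)
    {d : Fin m ⊕ Fin m} {q : ℕ} (hq : 2 ≤ q) (hρ : ρ (X (Pi.single d q)) = 0)
    {r : Fin m ⊕ Fin m → ℕ} (hrd : q ≤ r d + 1) (hr : q ≤ ∑ a, r a) : ρ (X r) = 0 := by
  obtain ⟨b, c, hc, hbracket⟩ := hX.exists_lie_single_eq_zsmul hq hrd hr
  have : (c : K) • ρ (X r) = 0 := by
    rw [Int.cast_smul_eq_zsmul, ← map_zsmul, ← hbracket, LieHom.map_lie, hρ, zero_lie]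
  exact (smul_eq_zero.mp this).resolve_left (Int.cast_ne_zero.mpr hc)

end HamiltonianBracket

theorem stmt16_general {m : ℕ} {g : Type*} [LieRing g] [LieAlgebra ℂ g]
    (Xg : (Fin m ⊕ Fin m → ℕ) → g)
    (hXg : ∀ j k : Fin m ⊕ Fin m → ℕ, 1 < ∑ a, j a → 1 < ∑ a, k a →
      ⁅Xg j, Xg k⁆ = ∑ i : Fin m,
        (((j (inr i) * k (inl i) : ℕ) : ℤ) - ((j (inl i) * k (inr i) : ℕ) : ℤ)) •
          Xg (j + k - (Pi.single (inl i) 1 + Pi.single (inr i) 1)))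
    {V : Type*} [AddCommGroup V] [Module ℂ V] [FiniteDimensional ℂ V]
    (ρ : g →ₗ⁅ℂ⁆ Module.End ℂ V) :
    ∃ k₀ : ℕ, ∀ r : Fin m ⊕ Fin m → ℕ, k₀ + 2 ≤ ∑ a, r a → ρ (Xg r) = 0 := by
  choose p hp2 hp0 using HamiltonianBracket.exists_map_single_eq_zero hXg ρ
  set P := univ.sup p
  refine ⟨Fintype.card (Fin m ⊕ Fin m) * P, fun r hr => ?_⟩
  obtain ⟨d, -, hd⟩ : ∃ d ∈ univ, P < r d :=
    exists_lt_of_sum_lt (by rw [sum_const, card_univ, smul_eq_mul]; omega)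
  have hpd : p d ≤ r d := (le_sup (mem_univ d)).trans hd.le
  exact HamiltonianBracket.map_eq_zero_of_map_single_eq_zero hXg ρ (hp2 d) (hp0 d) (by omega)
    (hpd.trans (single_le_sum (fun a _ => Nat.zero_le (r a)) (mem_univ d)))

/-- Let `V` be a finite dimensional module over `𝔥_N⁺ = ⊕_{k≥0} L_k`, the positive part of
the polynomial Hamiltonian Lie algebra (`N = 2m ≥ 2`), presented abstractly as a Lie algebra
`g` spanned by elements `Xg r`, `r ∈ ℤ_{≥0}^N` with `|r| > 1`, satisfying the Hamiltonian
bracket relations.  Then there exists `k₀` such that `L_k` acts trivially on `V` for all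
`k ≥ k₀`, i.e. all `X(r)` with `|r| ≥ k₀ + 2` act by zero. -/
theorem stmt16 {m : ℕ} (hm : 0 < m) {g : Type*} [LieRing g] [LieAlgebra ℂ g]
    (Xg : (Fin m ⊕ Fin m → ℕ) → g)
    (hXg : ∀ j k : Fin m ⊕ Fin m → ℕ, 1 < ∑ a, j a → 1 < ∑ a, k a →
      ⁅Xg j, Xg k⁆ = ∑ i : Fin m,
        (((j (inr i) * k (inl i) : ℕ) : ℤ) - ((j (inl i) * k (inr i) : ℕ) : ℤ)) •
          Xg (j + k - (Pi.single (inl i) 1 + Pi.single (inr i) 1)))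
    (hspan : ⊤ = Submodule.span ℂ (Xg '' {r | 1 < ∑ a, r a}))
    {V : Type*} [AddCommGroup V] [Module ℂ V] [FiniteDimensional ℂ V]
    (ρ : g →ₗ⁅ℂ⁆ Module.End ℂ V) :
    ∃ k₀ : ℕ, ∀ r : Fin m ⊕ Fin m → ℕ, k₀ + 2 ≤ ∑ a, r a → ρ (Xg r) = 0 :=
  stmt16_general Xg hXg ρ
end

section
/- Let V be a finite dimensional module for 𝔥_N⁺ ⊕ heis_N with action ρ such that ⊕_{k ≥ k₀} L_k acts trivially on V. Define H(r) = Σ_{k ∈ ℤ_{≥0}^N} (r^k/k!) ρ(P^{(k)}) for r ≠ 0 and H(0) = 0, where P^{(k)} corresponds to X(k) for |k|>1, to pⁱ, qⁱ for k = eᵢ, e_{m+i}, and to c for k = 0. Then the formula h(r)(t^s ⊗ v) = Σ_{i=1}^m (r_{m+i}s_i − r_i s_{m+i}) t^{r+s} ⊗ v + t^{r+s} ⊗ H(r)v, together with d_a(t^s ⊗ v) = (s_a + λ_a) t^s ⊗ v, defines an H_N-module structure on A_N ⊗ V, i.e., all commutator relations [d_a, h(r)] = r_a h(r) and [h(r),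 h(s)] = Σᵢ (r_{m+i}sᵢ − rᵢs_{m+i}) h(r+s) are satisfied. -/
open Sum

section
variable {m : ℕ} {V : Type*} [AddCommGroup V] [Module ℂ V]

/-- `H(r) = Σ_{k ∈ ℤ_{≥0}^N} (r^k/k!) P^{(k)}` for `r ≠ 0` and `H(0) = 0`: since
`P^{(k)} = 0` whenever `|k| ≥ k₀`, the sum may be taken over the finitely many `k` with all
components `≤ k₀`. Coordinates `1,…,m` are indexed by `inl i`, `m+1,…,2m` by `inr i`. -/
noncomputable def Hop (k₀ : ℕ) (P : (Fin m ⊕ Fin m → ℕ) → Module.End ℂ V)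
    (r : Fin m ⊕ Fin m → ℤ) : Module.End ℂ V :=
  if r = 0 then 0 else
    ∑ k : Fin m ⊕ Fin m → Fin (k₀ + 1),
      (∏ j, (r j : ℂ) ^ (k j : ℕ) / (Nat.factorial (k j) : ℂ)) • P (fun j => (k j : ℕ))

/-- The action of `d_a` on `A_N ⊗ V`: `d_a (t^s ⊗ v) = (s_a + λ_a) t^s ⊗ v`, with `A_N ⊗ V`
realized as `(ℤ^N) → V`, the component at `s` representing `t^s ⊗ V`. -/
def Dop (lam : Fin m ⊕ Fin m → ℂ) (a : Fin m ⊕ Fin m) :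
    Module.End ℂ ((Fin m ⊕ Fin m → ℤ) → V) where
  toFun f := fun s => ((s a : ℂ) + lam a) • f s
  map_add' f g := by funext s; simp [smul_add]
  map_smul' c f := by funext s; simp [smul_comm c]

/-- The action `h(r)(t^s ⊗ v) = Σᵢ (r_{m+i}sᵢ − rᵢs_{m+i}) t^{r+s} ⊗ v + t^{r+s} ⊗ H(r)v`
on `A_N ⊗ V`, realized as `(ℤ^N) → V`. -/
noncomputable def hop (k₀ : ℕ) (P : (Fin m ⊕ Fin m → ℕ) → Module.End ℂ V)
    (r : Fin m ⊕ Fin m → ℤ) : Module.End ℂ ((Fin m ⊕ Fin m → ℤ) → V) where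
  toFun f := fun s =>
    (∑ i : Fin m, ((r (inr i) * (s - r) (inl i) - r (inl i) * (s - r) (inr i) : ℤ) : ℂ))
        • f (s - r)
      + Hop k₀ P r (f (s - r))
  map_add' f g := by funext s; simp [smul_add]; abel
  map_smul' c f := by funext s; simp [smul_comm c]

end

/-!
Write `ω(r, s) = Σᵢ (r_{m+i} sᵢ − rᵢ s_{m+i})`. Everything reduces to
`[H(r), H(s)] = ω(r, s) (H(r + s) − H(r) − H(s))`, which also holds with the convention
`H(0) = 0` because `ω(r, s) = 0` when `r`, `s` or `r + s` vanishes.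
Expand the bracket bilinearly. Pairs of degree `≤ 1` only contribute the Heisenberg brackets,
`−ω(r, s) c`. For pairs of degrees `≥ 2`, the bracket of `𝔥_N⁺` and
`k_a r^k / k! = r_a r^{k - e_a} / (k - e_a)!` give `ω(r, s) Σ_{j, k ≠ 0} r^j s^k / (j! k!) P^{(j+k)}`,
and the multinomial identity `Σ_{j+k=w} r^j s^k / (j! k!) = (r + s)^w / w!` turns this sum into
`H(r + s) − H(r) − H(s) + c`. The relations for `d_a` and `h(r)` on `A_N ⊗ V` then follow
from the bilinearity and skew-symmetry of `ω`.
-/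
open Finset

section ExpCoeff
variable {ι : Type*} [Fintype ι]

/-- The coefficient `r^w / w!` of `P^{(w)}` in `H(r)`. -/
noncomputable def expCoeff (r : ι → ℤ) (w : ι → ℕ) : ℂ :=
  ∏ a, (r a : ℂ) ^ w a / (w a).factorial

lemma expCoeff_zero_right (r : ι → ℤ) : expCoeff r 0 = 1 := by
  simp [expCoeff]

variable [DecidableEq ι]

lemma expCoeff_single (r : ι → ℤ) (x : ι) : expCoeff r (Pi.single x 1) = r x := by
  rw [expCoeff, Fintype.prod_eq_single x fun a ha => by simp [Pi.single_eq_of_ne ha]]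
  simp

lemma expCoeff_add_single_mul (r : ι → ℤ) (w : ι → ℕ) (x : ι) :
    expCoeff r (w + Pi.single x 1) * ((w + Pi.single x 1 : ι → ℕ) x : ℂ) = r x * expCoeff r w := by
  have hrest : ∏ a ∈ {x}ᶜ, (r a : ℂ) ^ (w + Pi.single x 1 : ι → ℕ) a
        / ((w + Pi.single x 1 : ι → ℕ) a).factorial
      = ∏ a ∈ {x}ᶜ, (r a : ℂ) ^ w a / (w a).factorial :=
    prod_congr rfl fun a ha => by
      rw [mem_compl, mem_singleton] at ha
      simp [Pi.single_eq_of_ne ha]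
  rw [expCoeff, expCoeff, Fintype.prod_eq_mul_prod_compl x, hrest,
    Fintype.prod_eq_mul_prod_compl x]
  simp only [Pi.add_apply, Pi.single_eq_same, Nat.factorial_succ]
  push_cast
  field_simp
  ring

lemma sum_Iic_expCoeff_mul_expCoeff (r s : ι → ℤ) (w : ι → ℕ) :
    ∑ j ∈ Iic w, expCoeff r j * expCoeff s (w - j) = expCoeff (r + s) w := by
  have binomial (x y : ℂ) (n : ℕ) :
      ∑ t ∈ Iic n, x ^ t / t.factorial * (y ^ (n - t) / (n - t).factorial)
        = (x + y) ^ n / n.factorial := by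
    rw [← Nat.range_succ_eq_Iic, add_pow, sum_div]
    refine sum_congr rfl fun t ht => ?_
    have htn := Nat.lt_succ_iff.mp (mem_range.mp ht)
    have hchoose : (n.choose t : ℂ) ≠ 0 := by exact_mod_cast (Nat.choose_pos htn).ne'
    rw [← Nat.choose_mul_factorial_mul_factorial htn]
    push_cast
    field_simp
  simp only [expCoeff, ← prod_mul_distrib, Pi.sub_apply, Pi.add_apply, Int.cast_add]
  simp_rw [← binomial]
  rw [prod_univ_sum]
  rfl

end ExpCoeff

section MultiIndex

lemma single_one_le_iff {ι : Type*} [DecidableEq ι] {w : ι → ℕ} {x : ι} :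
    Pi.single x 1 ≤ w ↔ w x ≠ 0 := by
  refine ⟨fun h => Nat.one_le_iff_ne_zero.mp (by simpa using h x), fun h a => ?_⟩
  rcases eq_or_ne a x with rfl | hax
  · simpa [Nat.one_le_iff_ne_zero] using h
  · simp [Pi.single_eq_of_ne hax]

variable {ι : Type*} [Fintype ι]

lemma sum_pos_of_ne_zero {w : ι → ℕ} (hw : w ≠ 0) : 0 < ∑ a, w a :=
  Nat.pos_of_ne_zero fun h => hw (funext fun a => sum_eq_zero_iff.mp h a (mem_univ a))

lemma sum_lt_of_apply_ne_zero {M : Type*} [Zero M] {k₀ : ℕ} {P : (ι → ℕ) → M}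
    (hP : ∀ w, k₀ ≤ ∑ a, w a → P w = 0) {w : ι → ℕ} (hw : P w ≠ 0) : ∑ a, w a < k₀ :=
  not_le.mp fun h => hw (hP w h)

variable [DecidableEq ι]

lemma sum_add_single_one (w : ι → ℕ) (x : ι) :
    ∑ a, (w + Pi.single x 1 : ι → ℕ) a = ∑ a, w a + 1 := by
  simp [sum_add_distrib]

lemma tsub_single_one_ne_zero {w : ι → ℕ} {x : ι} (hw : 1 < ∑ a, w a) (hx : w x ≠ 0) :
    w - Pi.single x 1 ≠ 0 := by
  intro h0
  have h := tsub_add_cancel_of_le (single_one_le_iff.mpr hx)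
  rw [h0, zero_add] at h
  simp [← h] at hw

lemma mem_Iic_const_of_sum_le {n : ℕ} {w : ι → ℕ} (h : ∑ a, w a ≤ n) :
    w ∈ Iic (fun _ => n) :=
  mem_Iic.mpr fun a => (single_le_sum (fun _ _ => Nat.zero_le _) (mem_univ a)).trans h

end MultiIndex

section ExpSum
variable {ι : Type*} [Fintype ι] [DecidableEq ι] {M : Type*} [AddCommGroup M] [Module ℂ M]
  {k₀ : ℕ} {P : (ι → ℕ) → M}

noncomputable def expSum (k₀ : ℕ) (P : (ι → ℕ) → M) (r : ι → ℤ) : M :=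
  ∑ w ∈ Iic (fun _ => k₀), expCoeff r w • P w

lemma expSum_add_eq_sum_product (hP : ∀ w, k₀ ≤ ∑ a, w a → P w = 0) (r s : ι → ℤ) :
    expSum k₀ P (r + s)
      = ∑ p ∈ Iic (fun _ => k₀) ×ˢ Iic (fun _ => k₀),
          (expCoeff r p.1 * expCoeff s p.2) • P (p.1 + p.2) := by
  calc expSum k₀ P (r + s)
      = ∑ w ∈ Iic (fun _ => k₀), ∑ j ∈ Iic w, (expCoeff r j * expCoeff s (w - j)) • P w := by
        simp_rw [← sum_smul, sum_Iic_expCoeff_mul_expCoeff]; rfl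
    _ = ∑ q ∈ (Iic (fun _ => k₀)).sigma Iic,
          (expCoeff r q.2 * expCoeff s (q.1 - q.2)) • P q.1 := sum_sigma' _ _ _
    _ = _ := by
      refine sum_bij_ne_zero (fun q _ _ => (q.2, q.1 - q.2)) ?_ ?_ ?_ ?_
      · intro q hq _
        simp only [mem_sigma, mem_Iic] at hq
        exact mem_product.mpr ⟨mem_Iic.mpr (hq.2.trans hq.1), mem_Iic.mpr (tsub_le_self.trans hq.1)⟩
      · rintro ⟨w, j⟩ hq _ ⟨w', j'⟩ hq' _ h
        simp only [mem_sigma, mem_Iic] at hq hq'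
        simp only [Prod.mk.injEq] at h
        obtain ⟨rfl, h⟩ := h
        rw [← add_tsub_cancel_of_le hq.2, h, add_tsub_cancel_of_le hq'.2]
      · rintro ⟨j, k⟩ - hg
        have hlt := sum_lt_of_apply_ne_zero hP (right_ne_zero_of_smul hg)
        refine ⟨⟨j + k, j⟩, mem_sigma.mpr ⟨mem_Iic_const_of_sum_le hlt.le,
          mem_Iic.mpr le_self_add⟩, ?_, by simp⟩
        simpa using hg
      · rintro ⟨w, j⟩ hq _
        simp only [mem_sigma, mem_Iic] at hq
        simp [add_tsub_cancel_of_le hq.2]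

lemma sum_erase_zero_product (hP : ∀ w, k₀ ≤ ∑ a, w a → P w = 0) (r s : ι → ℤ) :
    ∑ p ∈ (Iic (fun _ => k₀)).erase 0 ×ˢ (Iic (fun _ => k₀)).erase 0,
        (expCoeff r p.1 * expCoeff s p.2) • P (p.1 + p.2)
      = expSum k₀ P (r + s) - expSum k₀ P r - expSum k₀ P s + P 0 := by
  have h0 : (0 : ι → ℕ) ∈ Iic (fun _ => k₀) := mem_Iic.mpr zero_le
  rw [expSum_add_eq_sum_product hP, sum_product, sum_product]
  simp only [sum_erase_eq_sub h0, sum_sub_distrib, expCoeff_zero_right, mul_one, one_mul,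
    add_zero, zero_add, one_smul, expSum]
  abel

lemma expCoeff_add_single_smul (r s : ι → ℤ) (x y : ι) (j k : ι → ℕ) :
    (expCoeff r (j + Pi.single x 1) * expCoeff s (k + Pi.single y 1)
        * ((j + Pi.single x 1 : ι → ℕ) x * (k + Pi.single y 1 : ι → ℕ) y : ℕ)) •
      P (j + Pi.single x 1 + (k + Pi.single y 1) - (Pi.single x 1 + Pi.single y 1))
    = ((r x * s y : ℤ) : ℂ) • ((expCoeff r j * expCoeff s k) • P (j + k)) := by
  rw [add_add_add_comm, add_tsub_cancel_right, smul_smul, Nat.cast_mul, mul_mul_mul_comm,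
    expCoeff_add_single_mul, expCoeff_add_single_mul]
  push_cast
  ring_nf

lemma sum_expCoeff_shift (hP : ∀ w, k₀ ≤ ∑ a, w a → P w = 0) (r s : ι → ℤ) (x y : ι) :
    ∑ p ∈ (Iic (fun _ => k₀) ×ˢ Iic (fun _ => k₀)).filter
        (fun p => 1 < ∑ a, p.1 a ∧ 1 < ∑ a, p.2 a),
        (expCoeff r p.1 * expCoeff s p.2 * (p.1 x * p.2 y : ℕ)) •
          P (p.1 + p.2 - (Pi.single x 1 + Pi.single y 1))
      = ((r x * s y : ℤ) : ℂ) • ∑ p ∈ (Iic (fun _ => k₀)).erase 0 ×ˢ (Iic (fun _ => k₀)).erase 0,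
          (expCoeff r p.1 * expCoeff s p.2) • P (p.1 + p.2) := by
  rw [smul_sum]
  symm
  refine sum_bij_ne_zero (fun q _ _ => (q.1 + Pi.single x 1, q.2 + Pi.single y 1)) ?_ ?_ ?_
    fun q _ _ => (expCoeff_add_single_smul r s x y q.1 q.2).symm
  · rintro ⟨j, k⟩ hq hg
    simp only [mem_product, mem_erase] at hq
    have hlt := sum_lt_of_apply_ne_zero hP (right_ne_zero_of_smul (right_ne_zero_of_smul hg))
    have hj := sum_pos_of_ne_zero hq.1.1
    have hk := sum_pos_of_ne_zero hq.2.1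
    simp only [Pi.add_apply, sum_add_distrib] at hlt
    simp only [mem_filter, mem_product, sum_add_single_one]
    exact ⟨⟨mem_Iic_const_of_sum_le (by rw [sum_add_single_one]; omega),
      mem_Iic_const_of_sum_le (by rw [sum_add_single_one]; omega)⟩, by omega, by omega⟩
  · intro q _ _ q' _ _ h
    simp only [Prod.mk.injEq, add_left_inj] at h
    exact Prod.ext h.1 h.2
  · rintro ⟨j, k⟩ hp hf
    simp only [mem_filter, mem_product, mem_Iic] at hp
    obtain ⟨hjx, hky⟩ : j x ≠ 0 ∧ k y ≠ 0 := by
      refine mul_ne_zero_iff.mp fun h0 => ?_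
      simp [h0] at hf
    have hj := tsub_add_cancel_of_le (single_one_le_iff.mpr hjx)
    have hk := tsub_add_cancel_of_le (single_one_le_iff.mpr hky)
    refine ⟨(j - Pi.single x 1, k - Pi.single y 1), ?_, ?_, by simp [hj, hk]⟩
    · exact mem_product.mpr
        ⟨mem_erase.mpr ⟨tsub_single_one_ne_zero hp.2.1 hjx, mem_Iic.mpr (tsub_le_self.trans hp.1.1)⟩,
          mem_erase.mpr ⟨tsub_single_one_ne_zero hp.2.2 hky, mem_Iic.mpr (tsub_le_self.trans hp.1.2)⟩⟩
    · dsimp only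
      rw [← expCoeff_add_single_smul, hj, hk]
      exact hf

end ExpSum

section Hamiltonian
variable {m : ℕ}

def omega (r s : Fin m ⊕ Fin m → ℤ) : ℤ :=
  ∑ i, (r (inr i) * s (inl i) - r (inl i) * s (inr i))

lemma omega_add_left (r r' s : Fin m ⊕ Fin m → ℤ) :
    omega (r + r') s = omega r s + omega r' s := by
  simp only [omega, ← sum_add_distrib, Pi.add_apply]
  exact sum_congr rfl fun i _ => by ring

lemma omega_add_right (r s s' : Fin m ⊕ Fin m → ℤ) :
    omega r (s + s') = omega r s + omega r s' := by
  simp only [omega, ← sum_add_distrib, Pi.add_apply]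
  exact sum_congr rfl fun i _ => by ring

lemma omega_swap (r s : Fin m ⊕ Fin m → ℤ) : omega s r = -omega r s := by
  simp only [omega, ← sum_neg_distrib]
  exact sum_congr rfl fun i _ => by ring

lemma omega_eq_zero_of_add_eq_zero {r s : Fin m ⊕ Fin m → ℤ} (h : r + s = 0) : omega r s = 0 := by
  rw [eq_neg_of_add_eq_zero_right h]
  simp only [omega, Pi.neg_apply]
  exact sum_eq_zero fun i _ => by ring

def heisPairs (m : ℕ) : Finset ((Fin m ⊕ Fin m → ℕ) × (Fin m ⊕ Fin m → ℕ)) :=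
  univ.image fun a => (Pi.single a 1, Pi.single a.swap 1)

variable {V : Type*} [AddCommGroup V] [Module ℂ V]

lemma Hop_eq_expSum {k₀ : ℕ} {P : (Fin m ⊕ Fin m → ℕ) → Module.End ℂ V}
    {r : Fin m ⊕ Fin m → ℤ} (hr : r ≠ 0) : Hop k₀ P r = expSum k₀ P r := by
  rw [Hop, if_neg hr, expSum]
  refine sum_bij' (fun k _ a => (k a : ℕ))
    (fun w hw a => ⟨w a, Nat.lt_succ_of_le (mem_Iic.mp hw a)⟩) ?_ (fun _ _ => mem_univ _)
    (fun _ _ => rfl) (fun _ _ => rfl) (fun _ _ => rfl)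
  exact fun k _ => mem_Iic.mpr fun a => Nat.lt_succ_iff.mp (k a).isLt

/-- The bracket relations of the operators `P^{(k)}` by which `𝔥_N⁺ ⊕ heis_N` acts, with
`⊕_{k ≥ k₀} L_k` acting trivially. -/
structure IsHamHeisRep (k₀ : ℕ) (P : (Fin m ⊕ Fin m → ℕ) → Module.End ℂ V) : Prop where
  lie_of_one_lt : ∀ j k : Fin m ⊕ Fin m → ℕ, 1 < ∑ a, j a → 1 < ∑ a, k a →
    ⁅P j, P k⁆ = ∑ i : Fin m,
      (((j (inr i) * k (inl i) : ℕ) : ℤ) - ((j (inl i) * k (inr i) : ℕ) : ℤ)) •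
        P (j + k - (Pi.single (inl i) 1 + Pi.single (inr i) 1))
  lie_single_inl_inr : ∀ i : Fin m, ⁅P (Pi.single (inl i) 1), P (Pi.single (inr i) 1)⁆ = P 0
  lie_of_sum_le_one : ∀ j k : Fin m ⊕ Fin m → ℕ, (∑ a, j a) ≤ 1 →
    (∀ i : Fin m, ¬(j = Pi.single (inl i) 1 ∧ k = Pi.single (inr i) 1) ∧
      ¬(j = Pi.single (inr i) 1 ∧ k = Pi.single (inl i) 1)) →
    ⁅P j, P k⁆ = 0
  eq_zero_of_le_sum : ∀ k : Fin m ⊕ Fin m → ℕ, k₀ ≤ ∑ a, k a → P k = 0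

namespace IsHamHeisRep
attribute [local instance] LieRing.ofAssociativeRing
variable {k₀ : ℕ} {P : (Fin m ⊕ Fin m → ℕ) → Module.End ℂ V}

lemma lie_single_inr_inl (hP : IsHamHeisRep k₀ P) (i : Fin m) :
    ⁅P (Pi.single (inr i) 1), P (Pi.single (inl i) 1)⁆ = -P 0 := by
  rw [← lie_skew, hP.lie_single_inl_inr]

lemma lie_eq_zero (hP : IsHamHeisRep k₀ P) {j k : Fin m ⊕ Fin m → ℕ}
    (hjk : ∑ a, j a ≤ 1 ∨ ∑ a, k a ≤ 1) (hH : (j, k) ∉ heisPairs m) : ⁅P j, P k⁆ = 0 := by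
  have key {j k : Fin m ⊕ Fin m → ℕ} (hj : ∑ a, j a ≤ 1) (hH : (j, k) ∉ heisPairs m) :
      ⁅P j, P k⁆ = 0 := by
    refine hP.lie_of_sum_le_one j k hj fun i => ⟨?_, ?_⟩ <;> rintro ⟨rfl, rfl⟩ <;> apply hH
    · exact mem_image.mpr ⟨inl i, mem_univ _, rfl⟩
    · exact mem_image.mpr ⟨inr i, mem_univ _, rfl⟩
  rcases hjk with hj | hk
  · exact key hj hH
  · rw [← lie_skew, key hk, neg_zero]
    contrapose! hH
    obtain ⟨a, -, ha⟩ := mem_image.mp hH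
    simp only [Prod.mk.injEq] at ha
    exact mem_image.mpr ⟨a.swap, mem_univ _, by rw [Sum.swap_swap, ha.1, ha.2]⟩

lemma sum_heisPairs (hP : IsHamHeisRep k₀ P) (r s : Fin m ⊕ Fin m → ℤ) :
    ∑ p ∈ heisPairs m, (expCoeff r p.1 * expCoeff s p.2) • ⁅P p.1, P p.2⁆
      = -((omega r s : ℤ) : ℂ) • P 0 := by
  rw [heisPairs, sum_image fun a _ b _ h => by
    simpa [Pi.single_apply] using congr_fun (Prod.ext_iff.mp h).1 a, Fintype.sum_sum_type]
  simp only [Sum.swap_inl, Sum.swap_inr, expCoeff_single, hP.lie_single_inl_inr,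
    hP.lie_single_inr_inl, omega, Int.cast_sum, neg_smul, sum_smul, ← sum_neg_distrib,
    ← sum_add_distrib]
  refine sum_congr rfl fun i _ => ?_
  push_cast
  module

lemma sum_lie_of_not_one_lt (hP : IsHamHeisRep k₀ P) (hk₀ : 0 < k₀) (r s : Fin m ⊕ Fin m → ℤ) :
    ∑ p ∈ (Iic (fun _ => k₀) ×ˢ Iic (fun _ => k₀)).filter
        (fun p => ¬(1 < ∑ a, p.1 a ∧ 1 < ∑ a, p.2 a)),
        (expCoeff r p.1 * expCoeff s p.2) • ⁅P p.1, P p.2⁆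
      = -((omega r s : ℤ) : ℂ) • P 0 := by
  rw [← hP.sum_heisPairs r s]
  symm
  refine sum_subset ?_ fun p hp hH => ?_
  · intro p hp
    obtain ⟨a, -, rfl⟩ := mem_image.mp hp
    have hsingle (b : Fin m ⊕ Fin m) : ∑ c, (Pi.single b 1 : Fin m ⊕ Fin m → ℕ) c = 1 := by simp
    simp only [mem_filter, mem_product, hsingle]
    exact ⟨⟨mem_Iic_const_of_sum_le (by rw [hsingle]; omega),
      mem_Iic_const_of_sum_le (by rw [hsingle]; omega)⟩, by omega⟩
  · rw [hP.lie_eq_zero (by have := (mem_filter.mp hp).2; omega) hH, smul_zero]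

lemma sum_lie_of_one_lt (hP : IsHamHeisRep k₀ P) (r s : Fin m ⊕ Fin m → ℤ) :
    ∑ p ∈ (Iic (fun _ => k₀) ×ˢ Iic (fun _ => k₀)).filter
        (fun p => 1 < ∑ a, p.1 a ∧ 1 < ∑ a, p.2 a),
        (expCoeff r p.1 * expCoeff s p.2) • ⁅P p.1, P p.2⁆
      = ((omega r s : ℤ) : ℂ) • ∑ p ∈ (Iic (fun _ => k₀)).erase 0 ×ˢ (Iic (fun _ => k₀)).erase 0,
          (expCoeff r p.1 * expCoeff s p.2) • P (p.1 + p.2) := by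
  have hexpand : ∀ p ∈ (Iic (fun _ => k₀) ×ˢ Iic (fun _ => k₀)).filter
      (fun p => 1 < ∑ a, p.1 a ∧ 1 < ∑ a, p.2 a),
      (expCoeff r p.1 * expCoeff s p.2) • ⁅P p.1, P p.2⁆
        = ∑ i, ((expCoeff r p.1 * expCoeff s p.2 * (p.1 (inr i) * p.2 (inl i) : ℕ)) •
              P (p.1 + p.2 - (Pi.single (inr i) 1 + Pi.single (inl i) 1))
            - (expCoeff r p.1 * expCoeff s p.2 * (p.1 (inl i) * p.2 (inr i) : ℕ)) •
              P (p.1 + p.2 - (Pi.single (inl i) 1 + Pi.single (inr i) 1))) := by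
    intro p hp
    rw [hP.lie_of_one_lt _ _ (mem_filter.mp hp).2.1 (mem_filter.mp hp).2.2, smul_sum]
    refine sum_congr rfl fun i _ => ?_
    rw [add_comm (Pi.single (inr i) 1), ← Int.cast_smul_eq_zsmul ℂ, smul_smul, ← sub_smul]
    push_cast
    ring_nf
  rw [sum_congr rfl hexpand, sum_comm]
  simp only [sum_sub_distrib, sum_expCoeff_shift hP.eq_zero_of_le_sum, ← sub_smul, ← sum_smul, omega,
    Int.cast_sub, Int.cast_sum]

lemma lie_expSum (hP : IsHamHeisRep k₀ P) (r s : Fin m ⊕ Fin m → ℤ) :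
    ⁅expSum k₀ P r, expSum k₀ P s⁆
      = ((omega r s : ℤ) : ℂ) • (expSum k₀ P (r + s) - expSum k₀ P r - expSum k₀ P s) := by
  rcases Nat.eq_zero_or_pos k₀ with rfl | hk₀
  · have hP0 (w : Fin m ⊕ Fin m → ℕ) : P w = 0 := hP.eq_zero_of_le_sum w (Nat.zero_le _)
    simp [expSum, hP0]
  have hbilin : ⁅expSum k₀ P r, expSum k₀ P s⁆
      = ∑ p ∈ Iic (fun _ => k₀) ×ˢ Iic (fun _ => k₀),
          (expCoeff r p.1 * expCoeff s p.2) • ⁅P p.1, P p.2⁆ := by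
    rw [expSum, expSum, sum_lie_sum, sum_product]
    exact sum_congr rfl fun j _ => sum_congr rfl fun k _ => by rw [smul_lie, lie_smul, smul_smul]
  rw [hbilin, ← sum_filter_add_sum_filter_not _ (fun p => 1 < ∑ a, p.1 a ∧ 1 < ∑ a, p.2 a),
    hP.sum_lie_of_one_lt, hP.sum_lie_of_not_one_lt hk₀,
    sum_erase_zero_product hP.eq_zero_of_le_sum]
  module

lemma lie_Hop (hP : IsHamHeisRep k₀ P) (r s : Fin m ⊕ Fin m → ℤ) :
    ⁅Hop k₀ P r, Hop k₀ P s⁆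
      = ((omega r s : ℤ) : ℂ) • (Hop k₀ P (r + s) - Hop k₀ P r - Hop k₀ P s) := by
  have Hop_zero : Hop k₀ P 0 = 0 := if_pos rfl
  rcases eq_or_ne r 0 with rfl | hr
  · simp [Hop_zero, omega]
  rcases eq_or_ne s 0 with rfl | hs
  · simp [Hop_zero, omega]
  rw [Hop_eq_expSum hr, Hop_eq_expSum hs, hP.lie_expSum]
  rcases eq_or_ne (r + s) 0 with hrs | hrs
  · simp [omega_eq_zero_of_add_eq_zero hrs]
  · rw [Hop_eq_expSum hrs]

end IsHamHeisRep

end Hamiltonian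

section Action
variable {m : ℕ} {V : Type*} [AddCommGroup V] [Module ℂ V]

lemma Dop_apply (lam : Fin m ⊕ Fin m → ℂ) (a : Fin m ⊕ Fin m) (f : (Fin m ⊕ Fin m → ℤ) → V)
    (t : Fin m ⊕ Fin m → ℤ) : Dop lam a f t = ((t a : ℂ) + lam a) • f t := rfl

lemma hop_apply (k₀ : ℕ) (P : (Fin m ⊕ Fin m → ℕ) → Module.End ℂ V) (r : Fin m ⊕ Fin m → ℤ)
    (f : (Fin m ⊕ Fin m → ℤ) → V) (t : Fin m ⊕ Fin m → ℤ) :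
    hop k₀ P r f t = ((omega r (t - r) : ℤ) : ℂ) • f (t - r) + Hop k₀ P r (f (t - r)) := by
  simp [hop, omega]

lemma lie_Dop_Dop (lam : Fin m ⊕ Fin m → ℂ) (a b : Fin m ⊕ Fin m) :
    ⁅(Dop lam a : Module.End ℂ ((Fin m ⊕ Fin m → ℤ) → V)),
      (Dop lam b : Module.End ℂ ((Fin m ⊕ Fin m → ℤ) → V))⁆ = 0 := by
  refine LinearMap.ext fun f => funext fun t => ?_
  simp only [Ring.lie_def, LinearMap.sub_apply, Module.End.mul_apply, Dop_apply, smul_smul,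
    mul_comm, sub_self, LinearMap.zero_apply, Pi.sub_apply, Pi.zero_apply]

lemma lie_Dop_hop (lam : Fin m ⊕ Fin m → ℂ) (a : Fin m ⊕ Fin m) (k₀ : ℕ)
    (P : (Fin m ⊕ Fin m → ℕ) → Module.End ℂ V) (r : Fin m ⊕ Fin m → ℤ) :
    ⁅(Dop lam a : Module.End ℂ ((Fin m ⊕ Fin m → ℤ) → V)), hop k₀ P r⁆ = (r a : ℂ) • hop k₀ P r := by
  refine LinearMap.ext fun f => funext fun t => ?_
  simp only [Ring.lie_def, LinearMap.sub_apply, LinearMap.smul_apply, Module.End.mul_apply,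
    Pi.sub_apply, Pi.smul_apply, Dop_apply, hop_apply, map_smul, Int.cast_sub]
  module

lemma IsHamHeisRep.lie_hop_hop {k₀ : ℕ} {P : (Fin m ⊕ Fin m → ℕ) → Module.End ℂ V}
    (hP : IsHamHeisRep k₀ P) (r s : Fin m ⊕ Fin m → ℤ) :
    ⁅hop k₀ P r, hop k₀ P s⁆ = ((omega r s : ℤ) : ℂ) • hop k₀ P (r + s) := by
  refine LinearMap.ext fun f => funext fun t => ?_
  obtain ⟨u, rfl⟩ : ∃ u, t = u + r + s := ⟨t - r - s, by abel⟩
  have hH := LinearMap.congr_fun (hP.lie_Hop r s) (f u)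
  simp only [Ring.lie_def, LinearMap.sub_apply, LinearMap.smul_apply, Module.End.mul_apply] at hH ⊢
  simp only [Pi.sub_apply, Pi.smul_apply, hop_apply, map_add, map_smul,
    show u + r + s - r = u + s by abel, show u + r + s - s = u + r by abel,
    show u + r + s - (r + s) = u by abel, add_sub_cancel_right, omega_add_right, omega_add_left,
    omega_swap r s, Int.cast_add, Int.cast_neg]
  linear_combination (norm := module) hH

end Action

theorem stmt19_general {m : ℕ} {V : Type*} [AddCommGroup V] [Module ℂ V]
    (P : (Fin m ⊕ Fin m → ℕ) → Module.End ℂ V)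
    (hP1 : ∀ j k : Fin m ⊕ Fin m → ℕ, 1 < ∑ a, j a → 1 < ∑ a, k a →
      ⁅P j, P k⁆ = ∑ i : Fin m,
        (((j (inr i) * k (inl i) : ℕ) : ℤ) - ((j (inl i) * k (inr i) : ℕ) : ℤ)) •
          P (j + k - (Pi.single (inl i) 1 + Pi.single (inr i) 1)))
    (hP2 : ∀ i : Fin m, ⁅P (Pi.single (inl i) 1), P (Pi.single (inr i) 1)⁆ = P 0)
    (hP3 : ∀ j k : Fin m ⊕ Fin m → ℕ, (∑ a, j a) ≤ 1 →
      (∀ i : Fin m, ¬(j = Pi.single (inl i) 1 ∧ k = Pi.single (inr i) 1) ∧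
        ¬(j = Pi.single (inr i) 1 ∧ k = Pi.single (inl i) 1)) →
      ⁅P j, P k⁆ = 0)
    (k₀ : ℕ) (htriv : ∀ k : Fin m ⊕ Fin m → ℕ, k₀ ≤ ∑ a, k a → P k = 0)
    (lam : Fin m ⊕ Fin m → ℂ) :
    (∀ a b : Fin m ⊕ Fin m,
      ⁅(Dop lam a : Module.End ℂ ((Fin m ⊕ Fin m → ℤ) → V)), (Dop lam b : Module.End ℂ ((Fin m ⊕ Fin m → ℤ) → V))⁆ = 0) ∧
    (∀ (a : Fin m ⊕ Fin m) (r : Fin m ⊕ Fin m → ℤ),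
      ⁅(Dop lam a : Module.End ℂ ((Fin m ⊕ Fin m → ℤ) → V)), hop k₀ P r⁆ = (r a : ℂ) • hop k₀ P r) ∧
    (∀ r s : Fin m ⊕ Fin m → ℤ,
      ⁅hop k₀ P r, hop k₀ P s⁆ = ∑ i : Fin m,
        ((r (inr i) * s (inl i) - r (inl i) * s (inr i) : ℤ) : ℂ) • hop k₀ P (r + s)) := by
  have hP : IsHamHeisRep k₀ P := ⟨hP1, hP2, hP3, htriv⟩
  refine ⟨lie_Dop_Dop lam, fun a r => lie_Dop_hop lam a k₀ P r, fun r s => ?_⟩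
  rw [← sum_smul, ← Int.cast_sum]
  exact hP.lie_hop_hop r s

/-- Let `V` be a finite dimensional module for `𝔥_N⁺ ⊕ heis_N` (given by operators `P^{(k)}`
satisfying the corresponding bracket relations) on which `⊕_{k ≥ k₀} L_k` acts trivially.
With `H(r) = Σ_k (r^k/k!) P^{(k)}` for `r ≠ 0`, `H(0) = 0`, the formulas
`h(r)(t^s ⊗ v) = Σᵢ (r_{m+i}sᵢ − rᵢs_{m+i}) t^{r+s} ⊗ v + t^{r+s} ⊗ H(r)v` and
`d_a(t^s ⊗ v) = (s_a + λ_a) t^s ⊗ v` define an `H_N`-module structure on `A_N ⊗ V`: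
all the commutator relations `[d_a, d_b] = 0`, `[d_a, h(r)] = r_a h(r)` and
`[h(r), h(s)] = Σᵢ (r_{m+i}sᵢ − rᵢs_{m+i}) h(r+s)` hold. -/
theorem stmt19 {m : ℕ} (hm : 0 < m) {V : Type*} [AddCommGroup V] [Module ℂ V]
    [FiniteDimensional ℂ V]
    (P : (Fin m ⊕ Fin m → ℕ) → Module.End ℂ V)
    (hP1 : ∀ j k : Fin m ⊕ Fin m → ℕ, 1 < ∑ a, j a → 1 < ∑ a, k a →
      ⁅P j, P k⁆ = ∑ i : Fin m,
        (((j (inr i) * k (inl i) : ℕ) : ℤ) - ((j (inl i) * k (inr i) : ℕ) : ℤ)) •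
          P (j + k - (Pi.single (inl i) 1 + Pi.single (inr i) 1)))
    (hP2 : ∀ i : Fin m, ⁅P (Pi.single (inl i) 1), P (Pi.single (inr i) 1)⁆ = P 0)
    (hP2' : ∀ i : Fin m, ⁅P (Pi.single (inr i) 1), P (Pi.single (inl i) 1)⁆ = -(P 0))
    (hP3 : ∀ j k : Fin m ⊕ Fin m → ℕ, (∑ a, j a) ≤ 1 →
      (∀ i : Fin m, ¬(j = Pi.single (inl i) 1 ∧ k = Pi.single (inr i) 1) ∧
        ¬(j = Pi.single (inr i) 1 ∧ k = Pi.single (inl i) 1)) →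
      ⁅P j, P k⁆ = 0)
    (k₀ : ℕ) (htriv : ∀ k : Fin m ⊕ Fin m → ℕ, k₀ ≤ ∑ a, k a → P k = 0)
    (lam : Fin m ⊕ Fin m → ℂ) :
    (∀ a b : Fin m ⊕ Fin m,
      ⁅(Dop lam a : Module.End ℂ ((Fin m ⊕ Fin m → ℤ) → V)), (Dop lam b : Module.End ℂ ((Fin m ⊕ Fin m → ℤ) → V))⁆ = 0) ∧
    (∀ (a : Fin m ⊕ Fin m) (r : Fin m ⊕ Fin m → ℤ),
      ⁅(Dop lam a : Module.End ℂ ((Fin m ⊕ Fin m → ℤ) → V)), hop k₀ P r⁆ = (r a : ℂ) • hop k₀ P r) ∧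
    (∀ r s : Fin m ⊕ Fin m → ℤ,
      ⁅hop k₀ P r, hop k₀ P s⁆ = ∑ i : Fin m,
        ((r (inr i) * s (inl i) - r (inl i) * s (inr i) : ℤ) : ℂ) • hop k₀ P (r + s)) :=
  stmt19_general P hP1 hP2 hP3 k₀ htriv lam
end
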